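/- arXiv:2501.17657 — 3 statements merged into one kernel-verified Lean document; each statement's English description precedes it below -/
import Mathlib

section
/- For k≥3, d>0, λ≥0, if z∈(0,1) is a fixed point of φ_{d,k,λ} (i.e. φ_{d,k,λ}(z)=z), then the second derivative of Φ_{d,k,λ} at z equals d(k−1)z^{k−2}(φ'_{d,k,λ}(z)−1). In particular Φ''_{d,k,λ}(z)<0 if φ'_{d,k,λ}(z)<1, Φ''_{d,k,λ}(z)=0 if φ'_{d,k,λ}(z)=1, and Φ''_{d,k,λ}(z)>0 if φ'_{d,k,λ}(z)>1. -/
noncomputable def phi (d lam : ℝ) (k : ℕ) (z : ℝ) : ℝ :=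
  1 - Real.exp (-lam - d * z ^ (k - 1))

noncomputable def Phi (d lam : ℝ) (k : ℕ) (z : ℝ) : ℝ :=
  Real.exp (-lam - d * z ^ (k - 1)) - d * ((k : ℝ) - 1) / k * z ^ k + d * z ^ (k - 1) - d / k

lemma hasDerivAt_inner (d lam : ℝ) (n : ℕ) (x : ℝ) :
    HasDerivAt (fun x : ℝ => -lam - d * x ^ (n + 2))
      (-(d * ((n : ℝ) + 2) * x ^ (n + 1))) x := by
  have h := ((hasDerivAt_pow (n + 2) x).const_mul d).const_sub (-lam)
  have e : n + 2 - 1 = n + 1 := rfl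
  rw [e] at h
  refine h.congr_deriv ?_
  push_cast
  ring

lemma hasDerivAt_phi (d lam : ℝ) (n : ℕ) (x : ℝ) :
    HasDerivAt (phi d lam (n + 3))
      (d * ((n : ℝ) + 2) * x ^ (n + 1) * Real.exp (-lam - d * x ^ (n + 2))) x := by
  have h2 := ((hasDerivAt_inner d lam n x).exp).const_sub 1
  have : phi d lam (n + 3) = fun x : ℝ => 1 - Real.exp (-lam - d * x ^ (n + 2)) := rfl
  rw [this]
  refine h2.congr_deriv ?_
  ring

lemma derivPhi (d lam : ℝ) (n : ℕ) :
    deriv (Phi d lam (n + 3))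
      = fun x : ℝ => d * ((n : ℝ) + 2) * x ^ (n + 1) * (phi d lam (n + 3) x - x) := by
  funext x
  have hE := (hasDerivAt_inner d lam n x).exp
  have hpow3 := (hasDerivAt_pow (n + 3) x).const_mul (d * (((n : ℝ) + 3) - 1) / ((n : ℝ) + 3))
  have hpow2 := (hasDerivAt_pow (n + 2) x).const_mul d
  have hPhi : Phi d lam (n + 3) = fun x : ℝ =>
      Real.exp (-lam - d * x ^ (n + 2))
        - d * (((n : ℝ) + 3) - 1) / ((n : ℝ) + 3) * x ^ (n + 3)
        + d * x ^ (n + 2) - d / ((n : ℝ) + 3) := by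
    funext y
    simp only [Phi]
    push_cast
    ring_nf
  have h := ((hE.sub hpow3).add hpow2).sub_const (d / ((n : ℝ) + 3))
  rw [hPhi]
  rw [show deriv (fun x : ℝ => Real.exp (-lam - d * x ^ (n + 2)) - d * (((n : ℝ) + 3) - 1) / ((n : ℝ) + 3) * x ^ (n + 3) + d * x ^ (n + 2) - d / ((n : ℝ) + 3)) x = _ from h.deriv]
  have hn3 : ((n : ℝ) + 3) ≠ 0 := by positivity
  have e2 : n + 2 - 1 = n + 1 := rfl
  have e3 : n + 3 - 1 = n + 2 := rfl
  rw [e2, e3]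
  simp only [phi]
  push_cast
  field_simp
  ring

theorem stmt_2 (k : ℕ) (hk : 3 ≤ k) (d lam : ℝ) (hd : 0 < d) (hlam : 0 ≤ lam)
    (z : ℝ) (hz : z ∈ Set.Ioo (0 : ℝ) 1) (hfix : phi d lam k z = z) :
    deriv (deriv (Phi d lam k)) z
        = d * ((k : ℝ) - 1) * z ^ (k - 2) * (deriv (phi d lam k) z - 1)
    ∧ (deriv (phi d lam k) z < 1 → deriv (deriv (Phi d lam k)) z < 0)
    ∧ (deriv (phi d lam k) z = 1 → deriv (deriv (Phi d lam k)) z = 0)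
    ∧ (1 < deriv (phi d lam k) z → 0 < deriv (deriv (Phi d lam k)) z) := by
  obtain ⟨n, rfl⟩ : ∃ n, k = n + 3 := ⟨k - 3, by omega⟩
  obtain ⟨hz0, hz1⟩ := hz
  have hphi := hasDerivAt_phi d lam n z
  -- second derivative
  have hprod : HasDerivAt (fun x : ℝ => d * ((n : ℝ) + 2) * x ^ (n + 1) * (phi d lam (n + 3) x - x))
      (d * ((n : ℝ) + 2) * (((n : ℕ) + 1 : ℕ) * z ^ n) * (phi d lam (n + 3) z - z)
        + d * ((n : ℝ) + 2) * z ^ (n + 1)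
          * (d * ((n : ℝ) + 2) * z ^ (n + 1) * Real.exp (-lam - d * z ^ (n + 2)) - 1)) z := by
    have h1 := (hasDerivAt_pow (n + 1) z).const_mul (d * ((n : ℝ) + 2))
    have e : n + 1 - 1 = n := rfl
    rw [e] at h1
    exact h1.mul (hphi.sub (hasDerivAt_id z))
  have hd2 : deriv (deriv (Phi d lam (n + 3))) z
      = d * ((n : ℝ) + 2) * z ^ (n + 1)
          * (d * ((n : ℝ) + 2) * z ^ (n + 1) * Real.exp (-lam - d * z ^ (n + 2)) - 1) := by
    rw [derivPhi d lam n, hprod.deriv, hfix]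
    ring
  have hdphi : deriv (phi d lam (n + 3)) z
      = d * ((n : ℝ) + 2) * z ^ (n + 1) * Real.exp (-lam - d * z ^ (n + 2)) := hphi.deriv
  have ekey : deriv (deriv (Phi d lam (n + 3))) z
      = d * (((n : ℕ) + 3 : ℕ) - 1 : ℝ) * z ^ (n + 3 - 2) * (deriv (phi d lam (n + 3)) z - 1) := by
    rw [hd2, hdphi]
    have e : n + 3 - 2 = n + 1 := rfl
    rw [e]
    push_cast
    ring
  have hF : 0 < d * (((n : ℕ) + 3 : ℕ) - 1 : ℝ) * z ^ (n + 3 - 2) := by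
    have : (0:ℝ) < (((n : ℕ) + 3 : ℕ) - 1 : ℝ) := by push_cast; linarith [Nat.cast_nonneg (α := ℝ) n]
    positivity
  refine ⟨ekey, ?_, ?_, ?_⟩
  · intro h; rw [ekey]; exact mul_neg_of_pos_of_neg hF (by linarith)
  · intro h; rw [ekey, h]; ring
  · intro h; rw [ekey]; exact mul_pos hF (by linarith)
end

section
/- Let k≥3, d>0, λ>0 and ζ_λ(z)=1−exp(−λ−dz^{k−1})−z on [0,1]. Then ζ_λ has at most three zeros in [0,1] (counted as distinct points). -/
noncomputable def zeta (d lam : ℝ) (k : ℕ) (z : ℝ) : ℝ :=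
  1 - Real.exp (-lam - d * z ^ (k - 1)) - z

section Aux

variable {f : ℝ → ℝ} {s : Set ℝ}

lemma combo_lemma (h : StrictConvexOn ℝ s f) {x y z : ℝ}
    (hx : x ∈ s) (hz : z ∈ s) (h1 : x < y) (h2 : y < z) :
    ∃ a b : ℝ, 0 < a ∧ 0 < b ∧ a + b = 1 ∧ f y < a * f x + b * f z := by
  have hy : y ∈ openSegment ℝ x z := by
    rw [openSegment_eq_Ioo (h1.trans h2)]; exact ⟨h1, h2⟩
  obtain ⟨a, b, ha, hb, hab, rfl⟩ := hy
  exact ⟨a, b, ha, hb, hab, by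
    simpa [smul_eq_mul] using h.2 hx hz (h1.trans h2).ne ha hb hab⟩

lemma key_mid (h : StrictConvexOn ℝ s f) {x y z : ℝ}
    (hx : x ∈ s) (hz : z ∈ s) (h1 : x < y) (h2 : y < z)
    (h0x : f x = 0) (h0z : f z = 0) : f y < 0 := by
  obtain ⟨a, b, _, _, _, hlt⟩ := combo_lemma h hx hz h1 h2
  rw [h0x, h0z] at hlt; linarith

lemma key_right (h : StrictConvexOn ℝ s f) {x y z : ℝ}
    (hx : x ∈ s) (hz : z ∈ s) (h1 : x < y) (h2 : y < z)
    (h0x : f x = 0) (h0y : f y = 0) : 0 < f z := by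
  obtain ⟨a, b, _, hb, _, hlt⟩ := combo_lemma h hx hz h1 h2
  rw [h0x, h0y] at hlt
  nlinarith

lemma key_left (h : StrictConvexOn ℝ s f) {x y z : ℝ}
    (hx : x ∈ s) (hz : z ∈ s) (h1 : x < y) (h2 : y < z)
    (h0y : f y = 0) (h0z : f z = 0) : 0 < f x := by
  obtain ⟨a, b, ha, _, _, hlt⟩ := combo_lemma h hx hz h1 h2
  rw [h0y, h0z] at hlt
  nlinarith

lemma zeros_le_two (h : StrictConvexOn ℝ s f) :
    Set.encard {z : ℝ | z ∈ s ∧ f z = 0} ≤ 2 := by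
  by_contra hc
  push_neg at hc
  obtain ⟨t, hts, ht⟩ := Set.exists_subset_encard_eq
    (show (3 : ℕ∞) ≤ _ from Order.add_one_le_of_lt hc)
  rw [Set.encard_eq_three] at ht
  obtain ⟨a, b, c, hab, hac, hbc, rfl⟩ := ht
  have ha := hts (by simp : a ∈ ({a, b, c} : Set ℝ))
  have hb := hts (by simp : b ∈ ({a, b, c} : Set ℝ))
  have hcm := hts (by simp : c ∈ ({a, b, c} : Set ℝ))
  have H : ∀ p q r : ℝ, (p ∈ s ∧ f p = 0) → (q ∈ s ∧ f q = 0) → (r ∈ s ∧ f r = 0) →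
      p < q → q < r → False := by
    intro p q r hp hq hr h1 h2
    have := key_mid h hp.1 hr.1 h1 h2 hp.2 hr.2
    rw [hq.2] at this; exact lt_irrefl 0 this
  rcases hab.lt_or_gt with h1 | h1 <;> rcases hac.lt_or_gt with h2 | h2 <;>
    rcases hbc.lt_or_gt with h3 | h3
  · exact H a b c ha hb hcm h1 h3
  · exact H a c b ha hcm hb h2 h3
  · linarith
  · exact H c a b hcm ha hb h2 h1
  · exact H b a c hb ha hcm h1 h2
  · linarith
  · exact H b c a hb hcm ha h3 h2
  · exact H c b a hcm hb ha h3 h1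

/-- Main auxiliary result with `m = k - 1 = n + 2`. -/
lemma aux_main (n : ℕ) (d lam : ℝ) (hd : 0 < d) (hlam : 0 < lam) :
    Set.encard {z : ℝ | z ∈ Set.Icc (0 : ℝ) 1 ∧
      1 - Real.exp (-lam - d * z ^ (n + 2)) - z = 0} ≤ 3 := by
  set f : ℝ → ℝ := fun z => 1 - Real.exp (-lam - d * z ^ (n + 2)) - z with hf
  set F : ℝ → ℝ := fun z => d * (↑(n + 2) : ℝ) *
      (z ^ (n + 1) * Real.exp (-lam - d * z ^ (n + 2))) - 1 with hF
  set G : ℝ → ℝ := fun z => d * (↑(n + 2) : ℝ) *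
      ((↑(n + 1) : ℝ) * z ^ n * Real.exp (-lam - d * z ^ (n + 2)) +
        z ^ (n + 1) * (Real.exp (-lam - d * z ^ (n + 2)) *
          (-(d * ((↑(n + 2) : ℝ) * z ^ (n + 1)))))) with hG
  -- first derivative
  have hexp : ∀ z : ℝ, HasDerivAt (fun z : ℝ => Real.exp (-lam - d * z ^ (n + 2)))
      (Real.exp (-lam - d * z ^ (n + 2)) * (-(d * ((↑(n + 2) : ℝ) * z ^ (n + 1))))) z := by
    intro z
    have hpow : HasDerivAt (fun z : ℝ => z ^ (n + 2)) ((↑(n + 2) : ℝ) * z ^ (n + 1)) z := by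
      simpa using hasDerivAt_pow (n + 2) z
    exact ((hpow.const_mul d).const_sub (-lam)).exp
  have hder1 : ∀ z : ℝ, HasDerivAt f (F z) z := by
    intro z
    have h1 : HasDerivAt f (0 - Real.exp (-lam - d * z ^ (n + 2)) *
        (-(d * ((↑(n + 2) : ℝ) * z ^ (n + 1)))) - 1) z :=
      ((hasDerivAt_const z (1 : ℝ)).sub (hexp z)).sub (hasDerivAt_id z)
    convert h1 using 1
    simp [hF]; ring
  have hder2 : ∀ z : ℝ, HasDerivAt F (G z) z := by
    intro z
    have hpow1 : HasDerivAt (fun z : ℝ => z ^ (n + 1)) ((↑(n + 1) : ℝ) * z ^ n) z := by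
      simpa using hasDerivAt_pow (n + 1) z
    have h1 := ((hpow1.mul (hexp z)).const_mul (d * (↑(n + 2) : ℝ))).sub_const 1
    exact h1
  have hDf : deriv f = F := funext fun z => (hder1 z).deriv
  have hD2 : ∀ x : ℝ, deriv^[2] f x = G x := by
    intro x
    have : deriv^[2] f = deriv (deriv f) := by
      simp [Function.iterate_succ, Function.comp]
    rw [this, hDf]
    exact (hder2 x).deriv
  have hcont : Continuous f := by
    have : Differentiable ℝ f := fun z => (hder1 z).differentiableAt
    exact this.continuous
  -- the inflection threshold
  set q : ℝ := (↑(n + 1) : ℝ) / (d * (↑(n + 2) : ℝ)) with hq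
  have hqpos : 0 < q := by positivity
  set c : ℝ := q ^ (((n + 2 : ℕ) : ℝ)⁻¹) with hc
  have hcpos : 0 < c := Real.rpow_pos_of_pos hqpos _
  have hcpow : c ^ (n + 2) = q := Real.rpow_inv_natCast_pow hqpos.le (by omega)
  set r : ℝ := min 1 c with hr
  have hr0 : 0 < r := lt_min one_pos hcpos
  have hr1 : r ≤ 1 := min_le_left _ _
  -- convexity on [0, r]
  have hconv : StrictConvexOn ℝ (Set.Icc 0 r) f := by
    apply strictConvexOn_of_deriv2_pos (convex_Icc 0 r) hcont.continuousOn
    intro x hx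
    rw [interior_Icc] at hx
    rw [hD2]
    have hx0 : 0 < x := hx.1
    have hxc : x < c := lt_of_lt_of_le hx.2 (min_le_right _ _)
    have hxpow : x ^ (n + 2) < q := by
      rw [← hcpow]
      exact pow_lt_pow_left₀ hxc hx0.le (by omega)
    have h1 : (0 : ℝ) < d * (↑(n + 2) : ℝ) := by positivity
    have hkey : d * (↑(n + 2) : ℝ) * x ^ (n + 2) < (↑(n + 1) : ℝ) := by
      have h2 := mul_lt_mul_of_pos_left hxpow h1
      have h3 : d * (↑(n + 2) : ℝ) * q = (↑(n + 1) : ℝ) := by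
        rw [hq]; field_simp
      linarith
    have hGx : G x = d * (↑(n + 2) : ℝ) * Real.exp (-lam - d * x ^ (n + 2)) *
        (x ^ n * ((↑(n + 1) : ℝ) - d * (↑(n + 2) : ℝ) * x ^ (n + 2))) := by
      simp only [hG]; ring
    rw [hGx]
    have he := Real.exp_pos (-lam - d * x ^ (n + 2))
    have hxn : (0 : ℝ) < x ^ n := pow_pos hx0 n
    exact mul_pos (mul_pos h1 he) (mul_pos hxn (by linarith))
  -- concavity on [r, 1]
  have hconc : StrictConcaveOn ℝ (Set.Icc r 1) f := by
    apply strictConcaveOn_of_deriv2_neg (convex_Icc r 1) hcont.continuousOn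
    intro x hx
    rw [interior_Icc] at hx
    rw [hD2]
    have hc1 : c < 1 := by
      rcases min_lt_iff.mp (lt_of_lt_of_le (lt_trans hx.1 hx.2) (le_refl 1)) with h | h
      · exact absurd h (lt_irrefl 1)
      · exact h
    have hrc : r = c := min_eq_right hc1.le
    have hx0 : 0 < x := lt_trans hr0 hx.1
    have hcx : c < x := hrc ▸ hx.1
    have hxpow : q < x ^ (n + 2) := by
      rw [← hcpow]
      exact pow_lt_pow_left₀ hcx hcpos.le (by omega)
    have h1 : (0 : ℝ) < d * (↑(n + 2) : ℝ) := by positivity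
    have hkey : (↑(n + 1) : ℝ) < d * (↑(n + 2) : ℝ) * x ^ (n + 2) := by
      have h2 := mul_lt_mul_of_pos_left hxpow h1
      have h3 : d * (↑(n + 2) : ℝ) * q = (↑(n + 1) : ℝ) := by
        rw [hq]; field_simp
      linarith
    have hGx : G x = d * (↑(n + 2) : ℝ) * Real.exp (-lam - d * x ^ (n + 2)) *
        (x ^ n * ((↑(n + 1) : ℝ) - d * (↑(n + 2) : ℝ) * x ^ (n + 2))) := by
      simp only [hG]; ring
    rw [hGx]
    have he := Real.exp_pos (-lam - d * x ^ (n + 2))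
    have hxn : (0 : ℝ) < x ^ n := pow_pos hx0 n
    have : x ^ n * ((↑(n + 1) : ℝ) - d * (↑(n + 2) : ℝ) * x ^ (n + 2)) < 0 :=
      mul_neg_of_pos_of_neg hxn (by linarith)
    exact mul_neg_of_pos_of_neg (mul_pos h1 he) this
  -- the zero sets
  set S1 : Set ℝ := {z : ℝ | z ∈ Set.Icc 0 r ∧ f z = 0} with hS1def
  set S2 : Set ℝ := {z : ℝ | z ∈ Set.Ioc r 1 ∧ f z = 0} with hS2def
  have hsub : {z : ℝ | z ∈ Set.Icc (0 : ℝ) 1 ∧ f z = 0} ⊆ S1 ∪ S2 := by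
    intro z hz
    obtain ⟨⟨hz0, hz1⟩, hzf⟩ := hz
    rcases le_or_gt z r with h | h
    · exact Or.inl ⟨⟨hz0, h⟩, hzf⟩
    · exact Or.inr ⟨⟨h, hz1⟩, hzf⟩
  have hS1card : S1.encard ≤ 2 := zeros_le_two hconv
  have hS2card : S2.encard ≤ 2 := by
    have h2 : Set.encard {z : ℝ | z ∈ Set.Icc r 1 ∧ (-f) z = 0} ≤ 2 :=
      zeros_le_two hconc.neg
    refine le_trans (Set.encard_le_encard ?_) h2
    intro z hz
    exact ⟨⟨hz.1.1.le, hz.1.2⟩, by simp [hz.2]⟩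
  by_cases hcase : S2.encard ≤ 1
  · calc Set.encard {z : ℝ | z ∈ Set.Icc (0 : ℝ) 1 ∧ f z = 0}
        ≤ (S1 ∪ S2).encard := Set.encard_le_encard hsub
      _ ≤ S1.encard + S2.encard := Set.encard_union_le _ _
      _ ≤ 2 + 1 := add_le_add hS1card hcase
      _ = 3 := by rfl
  · push_neg at hcase
    obtain ⟨x, y, hx, hy, hxy⟩ := Set.one_lt_encard_iff.mp hcase
    -- wlog x < y
    have main : ∀ x y : ℝ, x ∈ S2 → y ∈ S2 → x < y → S1.encard ≤ 1 := by
      intro x y hx hy hxy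
      rw [Set.encard_le_one_iff]
      intro a b ha hb
      by_contra hab
      have key : ∀ a b : ℝ, a ∈ S1 → b ∈ S1 → a < b → False := by
        intro a b ha hb haltb
        -- 0 ≤ f r from convexity
        have hrmem : r ∈ Set.Icc (0 : ℝ) r := ⟨hr0.le, le_refl r⟩
        have hfr : 0 ≤ f r := by
          rcases eq_or_lt_of_le hb.1.2 with heq | hlt
          · rw [← heq]; exact le_of_eq hb.2.symm
          · exact (key_right hconv ha.1 hrmem haltb hlt ha.2 hb.2).le
        -- f r < 0 from concavity
        have hrmem' : r ∈ Set.Icc r 1 := ⟨le_refl r, hr1⟩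
        have hymem : y ∈ Set.Icc r 1 := ⟨hy.1.1.le, hy.1.2⟩
        have hfr' : 0 < (-f) r :=
          key_left hconc.neg hrmem' hymem hx.1.1 hxy
            (by simp [hx.2]) (by simp [hy.2])
        simp only [Pi.neg_apply] at hfr'
        linarith
      rcases lt_or_gt_of_ne hab with h | h
      · exact key a b ha hb h
      · exact key b a hb ha h
    have hS1card' : S1.encard ≤ 1 := by
      rcases lt_or_gt_of_ne hxy with h | h
      · exact main x y hx hy h
      · exact main y x hy hx h
    calc Set.encard {z : ℝ | z ∈ Set.Icc (0 : ℝ) 1 ∧ f z = 0}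
        ≤ (S1 ∪ S2).encard := Set.encard_le_encard hsub
      _ ≤ S1.encard + S2.encard := Set.encard_union_le _ _
      _ ≤ 1 + 2 := add_le_add hS1card' hS2card
      _ = 3 := by rfl

end Aux

theorem stmt_8 (k : ℕ) (hk : 3 ≤ k) (d lam : ℝ) (hd : 0 < d) (hlam : 0 < lam) :
    Set.encard {z : ℝ | z ∈ Set.Icc (0 : ℝ) 1 ∧ zeta d lam k z = 0} ≤ 3 := by
  have hk1 : k - 1 = (k - 3) + 2 := by omega
  have := aux_main (k - 3) d lam hd hlam
  convert this using 4 with z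
  rw [zeta, hk1]
end

section
/- Let k≥3, d>0 and λ>0, and let α(λ) be a differentiable family of fixed points of φ_{d,k,λ} (so φ_{d,k,λ}(α(λ))=α(λ)). Then the map λ↦Φ_{d,k,λ}(α(λ)) has derivative α(λ)−1 with respect to λ. -/
theorem stmt_14 (k : ℕ) (hk : 3 ≤ k) (d : ℝ) (hd : 0 < d)
    (a b : ℝ) (hab : 0 < a) (α : ℝ → ℝ)
    (hdiff : ∀ lam ∈ Set.Ioo a b, DifferentiableAt ℝ α lam)
    (hmem : ∀ lam ∈ Set.Ioo a b, α lam ∈ Set.Ioo (0 : ℝ) 1)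
    (hfix : ∀ lam ∈ Set.Ioo a b, phi d lam k (α lam) = α lam) :
    ∀ lam ∈ Set.Ioo a b,
      deriv (fun t => Phi d t k (α t)) lam = α lam - 1 := by
  intro lam hlam
  have hopen : Set.Ioo a b ∈ nhds lam := isOpen_Ioo.mem_nhds hlam
  set A := α lam with hA
  set α' := deriv α lam with hα'def
  have hda : HasDerivAt α α' lam := (hdiff lam hlam).hasDerivAt
  have hexp : ∀ t ∈ Set.Ioo a b, Real.exp (-t - d * α t ^ (k - 1)) = 1 - α t := by
    intro t ht
    have h := hfix t ht
    simp only [phi] at h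
    linarith
  have hE0 : Real.exp (-lam - d * A ^ (k - 1)) = 1 - A := hexp lam hlam
  set c : ℝ := d * ((k - 1 : ℕ) : ℝ) * A ^ (k - 2) with hc
  -- derivative of inner function
  have hinner : HasDerivAt (fun t => -t - d * α t ^ (k - 1)) (-1 - c * α') lam := by
    have h1 : HasDerivAt (fun t => α t ^ (k - 1))
        (((k - 1 : ℕ) : ℝ) * A ^ (k - 1 - 1) * α') lam := hda.pow (k - 1)
    have h2 := ((hasDerivAt_id lam).neg).sub (h1.const_mul d)
    convert h2 using 1
    case e'_4 => rfl
    case e'_5 => rfl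
    case e'_8 => rfl
    have hk12 : k - 1 - 1 = k - 2 := by omega
    rw [hk12, hc]; ring
  have hEder : HasDerivAt (fun t => Real.exp (-t - d * α t ^ (k - 1)))
      (Real.exp (-lam - d * A ^ (k - 1)) * (-1 - c * α')) lam := hinner.exp
  -- fixed point derivative equation
  have heq : α' = (1 - A) * (1 + c * α') := by
    have hfeq : (fun t => 1 - Real.exp (-t - d * α t ^ (k - 1))) =ᶠ[nhds lam] α := by
      filter_upwards [hopen] with t ht
      rw [hexp t ht]; ring
    have hda2 : HasDerivAt α (-(Real.exp (-lam - d * A ^ (k - 1)) * (-1 - c * α'))) lam :=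
      (hEder.const_sub 1).congr_of_eventuallyEq hfeq.symm
    have := hda2.deriv
    rw [← hα'def, hE0] at this
    linear_combination this
  -- Phi along α eventually equals a simpler function
  have hPeq : (fun t => Phi d t k (α t)) =ᶠ[nhds lam]
      (fun t => 1 - α t - d * ((k : ℝ) - 1) / k * α t ^ k + d * α t ^ (k - 1) - d / k) := by
    filter_upwards [hopen] with t ht
    simp only [Phi]
    rw [hexp t ht]
  have hF : HasDerivAt
      (fun t => 1 - α t - d * ((k : ℝ) - 1) / k * α t ^ k + d * α t ^ (k - 1) - d / k)
      (-α' - d * ((k : ℝ) - 1) / k * ((k : ℕ) * A ^ (k - 1) * α') + c * α') lam := by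
    have h1 : HasDerivAt (fun t => α t ^ k) (((k : ℕ) : ℝ) * A ^ (k - 1) * α') lam := hda.pow k
    have h2 : HasDerivAt (fun t => α t ^ (k - 1))
        (((k - 1 : ℕ) : ℝ) * A ^ (k - 1 - 1) * α') lam := hda.pow (k - 1)
    have h3 := (((hda.const_sub 1).sub (h1.const_mul (d * ((k : ℝ) - 1) / k))).add
      (h2.const_mul d)).sub_const (d / k)
    convert h3 using 1
    case e'_4 => rfl
    case e'_5 => rfl
    case e'_8 => rfl
    have hk12 : k - 1 - 1 = k - 2 := by omega
    rw [hk12, hc]; ring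
  rw [hPeq.deriv_eq, hF.deriv]
  -- final algebra
  have hk0 : (k : ℝ) ≠ 0 := by positivity
  have hcast : ((k - 1 : ℕ) : ℝ) = (k : ℝ) - 1 := by
    have : (1 : ℕ) ≤ k := by omega
    push_cast [Nat.cast_sub this]; ring
  have hApow : A ^ (k - 1) = A ^ (k - 2) * A := by
    rw [← pow_succ]; congr 1; omega
  rw [hc, hcast] at heq ⊢
  rw [hApow]
  field_simp
  nlinarith [heq, sq_nonneg A]
end
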